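/- arXiv:1912.08570 — 2 statements merged into one kernel-verified Lean document; each statement's English description precedes it below -/
import Mathlib

section
/- Let m be a nonzero integer, S an open subset of {(ρ,z) ∈ ℝ² : ρ > 0}, and u : S → ℝ continuously differentiable on S. Then at every point of S one has η_{m,1}(grad^m u) = G(η_{m,0}(u)); explicitly, (1/ρ)(m ∂_ρ u − (m/ρ) u) = ∂_ρ((m/ρ) u), (m/ρ) ∂_z u = ∂_z((m/ρ) u), and both third components equal −(m/ρ) u. (Gradient part of the lemma stating that the operators η_{m,k} intertwine the mode-m cylindrical operators with the Cartesian operators.) -/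
/-- Partial derivative in the first (ρ) direction. -/
noncomputable def pdRho (f : ℝ × ℝ → ℝ) (p : ℝ × ℝ) : ℝ := fderiv ℝ f p (1, 0)

/-- Partial derivative in the second (z) direction. -/
noncomputable def pdZ (f : ℝ × ℝ → ℝ) (p : ℝ × ℝ) : ℝ := fderiv ℝ f p (0, 1)

section PartialDerivatives

variable {f g : ℝ × ℝ → ℝ} {q : ℝ × ℝ}

theorem pdRho_mul (hf : DifferentiableAt ℝ f q) (hg : DifferentiableAt ℝ g q) :
    pdRho (fun p => f p * g p) q = f q * pdRho g q + g q * pdRho f q := by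
  simp [pdRho, fderiv_fun_mul hf hg]

theorem pdZ_mul (hf : DifferentiableAt ℝ f q) (hg : DifferentiableAt ℝ g q) :
    pdZ (fun p => f p * g p) q = f q * pdZ g q + g q * pdZ f q := by
  simp [pdZ, fderiv_fun_mul hf hg]

theorem hasFDerivAt_const_div_fst (c : ℝ) (hq : q.1 ≠ 0) :
    HasFDerivAt (fun p : ℝ × ℝ => c / p.1)
      ((-(c / q.1 ^ 2)) • ContinuousLinearMap.fst ℝ ℝ ℝ) q := by
  have hinv : HasDerivAt (fun x : ℝ => c / x) (-(c / q.1 ^ 2)) q.1 := by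
    simpa [div_eq_mul_inv] using (hasDerivAt_inv hq).const_mul c
  exact hinv.comp_hasFDerivAt q hasFDerivAt_fst

theorem pdRho_const_div_fst (c : ℝ) (hq : q.1 ≠ 0) :
    pdRho (fun p => c / p.1) q = -(c / q.1 ^ 2) := by
  simp [pdRho, (hasFDerivAt_const_div_fst c hq).fderiv]

theorem pdZ_const_div_fst (c : ℝ) (hq : q.1 ≠ 0) :
    pdZ (fun p => c / p.1) q = 0 := by
  simp [pdZ, (hasFDerivAt_const_div_fst c hq).fderiv]

end PartialDerivatives

theorem eta_intertwines_grad_general (m : ℤ) (S : Set (ℝ × ℝ)) (hS : IsOpen S)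
    (hSpos : ∀ p ∈ S, 0 < p.1) (u : ℝ × ℝ → ℝ) (hu : ContDiffOn ℝ 1 u S) :
    ∀ q ∈ S,
      ((1 / q.1) * ((m : ℝ) * pdRho u q - ((m : ℝ) / q.1) * u q),
        ((m : ℝ) / q.1) * pdZ u q,
        -(((m : ℝ) / q.1) * u q))
      = (pdRho (fun p => ((m : ℝ) / p.1) * u p) q,
         pdZ (fun p => ((m : ℝ) / p.1) * u p) q,
         -(((m : ℝ) / q.1) * u q)) := by
  intro q hq
  have hq0 : q.1 ≠ 0 := (hSpos q hq).ne'
  have hu_diff : DifferentiableAt ℝ u q :=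
    (hu.differentiableOn one_ne_zero).differentiableAt (hS.mem_nhds hq)
  have hc_diff : DifferentiableAt ℝ (fun p : ℝ × ℝ => (m : ℝ) / p.1) q :=
    (hasFDerivAt_const_div_fst _ hq0).differentiableAt
  rw [pdRho_mul hc_diff hu_diff, pdZ_mul hc_diff hu_diff, pdRho_const_div_fst _ hq0,
    pdZ_const_div_fst _ hq0]
  refine Prod.ext ?_ (Prod.ext ?_ rfl)
  · field_simp
    ring
  · simp

/-- Gradient part of the intertwining lemma: `η_{m,1}(grad^m u) = G(η_{m,0}(u))`. -/
theorem eta_intertwines_grad (m : ℤ) (hm : m ≠ 0) (S : Set (ℝ × ℝ)) (hS : IsOpen S)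
    (hSpos : ∀ p ∈ S, 0 < p.1) (u : ℝ × ℝ → ℝ) (hu : ContDiffOn ℝ 1 u S) :
    ∀ q ∈ S,
      ((1 / q.1) * ((m : ℝ) * pdRho u q - ((m : ℝ) / q.1) * u q),
        ((m : ℝ) / q.1) * pdZ u q,
        -(((m : ℝ) / q.1) * u q))
      = (pdRho (fun p => ((m : ℝ) / p.1) * u p) q,
         pdZ (fun p => ((m : ℝ) / p.1) * u p) q,
         -(((m : ℝ) / q.1) * u q)) :=
  eta_intertwines_grad_general m S hS hSpos u hu
end

section
/- Let m be a nonzero integer, S an open subset of {(ρ,z) ∈ ℝ² : ρ > 0}, and ṽ = (ṽ₁, ṽ₂, ṽ₃) : S → ℝ³ continuously differentiable on S. Then at every point of S, curl^m(η_{m,1}^{-1}(ṽ)) = (−ṽ₂ − ∂_z ṽ₃, ṽ₁ + ∂_ρ ṽ₃, (1/m)(ρ ∂_z ṽ₁ − ∂_ρ(ρ ṽ₂) − ∂_z ṽ₃)), and this vector equals η_{m,2}^{-1}(C(ṽ)). (Curl part of the lemma stating that the inverse maps η_{m,k}^{-1} intertwine the Cartesian operators with the mode-m cylindrical operators.) 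-/
/-!
Both identities are direct computations at a point: the product rule gives
`∂_ρ(ρ f) = f + ρ ∂_ρ f` and `∂_z(ρ f) = ρ ∂_z f` for the components of `η_{m,1}^{-1} ṽ`,
after which the factors `m / ρ` and `ρ / m` cancel because `m ≠ 0` and `ρ > 0`.
-/

section PartialDerivatives

variable {f g : ℝ × ℝ → ℝ} {q : ℝ × ℝ}

theorem pdRho_fst_mul (hf : DifferentiableAt ℝ f q) :
    pdRho (fun p => p.1 * f p) q = f q + q.1 * pdRho f q := by
  simp only [pdRho, fderiv_fun_mul differentiableAt_fst hf, fderiv_fst, add_apply, smul_apply,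
    smul_eq_mul, ContinuousLinearMap.coe_fst', mul_one]
  ring

theorem pdZ_fst_mul (hf : DifferentiableAt ℝ f q) :
    pdZ (fun p => p.1 * f p) q = q.1 * pdZ f q := by
  simp [pdZ, fderiv_fun_mul differentiableAt_fst hf, fderiv_fst]

theorem pdZ_sub (hf : DifferentiableAt ℝ f q) (hg : DifferentiableAt ℝ g q) :
    pdZ (fun p => f p - g p) q = pdZ f q - pdZ g q := by
  simp [pdZ, fderiv_fun_sub hf hg]

theorem pdRho_div_const (hf : DifferentiableAt ℝ f q) (c : ℝ) :
    pdRho (fun p => f p / c) q = pdRho f q / c := by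
  simp [pdRho, div_eq_mul_inv, fderiv_mul_const hf, mul_comm]

theorem pdZ_div_const (hf : DifferentiableAt ℝ f q) (c : ℝ) :
    pdZ (fun p => f p / c) q = pdZ f q / c := by
  simp [pdZ, div_eq_mul_inv, fderiv_mul_const hf, mul_comm]

end PartialDerivatives

section CurlIntertwining

variable {v1 v2 v3 : ℝ × ℝ → ℝ} {q : ℝ × ℝ}

theorem curlMode_etaInv₁_eq {c : ℝ} (hc : c ≠ 0) (hρ : q.1 ≠ 0)
    (h1 : DifferentiableAt ℝ v1 q) (h2 : DifferentiableAt ℝ v2 q)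
    (h3 : DifferentiableAt ℝ v3 q) :
    ((-((c / q.1) * (q.1 / c * v2 q)) - pdZ v3 q,
        (1 / q.1) * (pdRho (fun p => p.1 * v3 p) q + c * ((q.1 * v1 q - v3 q) / c)),
        pdZ (fun p => (p.1 * v1 p - v3 p) / c) q - pdRho (fun p => p.1 / c * v2 p) q)
      = (-(v2 q) - pdZ v3 q,
         v1 q + pdRho v3 q,
         (1 / c) * (q.1 * pdZ v1 q - pdRho (fun p => p.1 * v2 p) q - pdZ v3 q))) := by
  have hv1 : DifferentiableAt ℝ (fun p => p.1 * v1 p) q := differentiableAt_fst.fun_mul h1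
  have hv2 : DifferentiableAt ℝ (fun p => p.1 * v2 p) q := differentiableAt_fst.fun_mul h2
  simp_rw [div_mul_eq_mul_div _ c (v2 _)]
  rw [pdZ_div_const (hv1.fun_sub h3), pdZ_sub hv1 h3, pdZ_fst_mul h1,
    pdRho_div_const hv2, pdRho_fst_mul h2, pdRho_fst_mul h3]
  refine Prod.ext ?_ (Prod.ext ?_ ?_) <;> field_simp <;> ring

theorem etaInv₂_cartesianCurl_eq (c : ℝ) (h2 : DifferentiableAt ℝ v2 q) :
    ((-(v2 q) - pdZ v3 q,
        v1 q + pdRho v3 q,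
        (1 / c) * (q.1 * pdZ v1 q - pdRho (fun p => p.1 * v2 p) q - pdZ v3 q))
      = (-(v2 q) - pdZ v3 q,
         v1 q + pdRho v3 q,
         (q.1 * (pdZ v1 q - pdRho v2 q) + (-(v2 q) - pdZ v3 q)) / c)) := by
  rw [pdRho_fst_mul h2]
  refine Prod.ext rfl (Prod.ext rfl ?_)
  ring

end CurlIntertwining

/-- Curl part of the inverse intertwining lemma:
`curl^m(η_{m,1}^{-1}(ṽ))` equals the explicit vector, which equals `η_{m,2}^{-1}(C(ṽ))`. -/
theorem eta_inv_intertwines_curl (m : ℤ) (hm : m ≠ 0) (S : Set (ℝ × ℝ)) (hS : IsOpen S)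
    (hSpos : ∀ p ∈ S, 0 < p.1) (v1 v2 v3 : ℝ × ℝ → ℝ)
    (hv1 : ContDiffOn ℝ 1 v1 S) (hv2 : ContDiffOn ℝ 1 v2 S) (hv3 : ContDiffOn ℝ 1 v3 S) :
    ∀ q ∈ S,
      -- curl^m applied to η_{m,1}^{-1}(v1, v2, v3) equals the explicit vector
      ((-(((m : ℝ) / q.1) * (q.1 / (m : ℝ) * v2 q)) - pdZ v3 q,
        (1 / q.1) * (pdRho (fun p => p.1 * v3 p) q
          + (m : ℝ) * ((q.1 * v1 q - v3 q) / (m : ℝ))),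
        pdZ (fun p => (p.1 * v1 p - v3 p) / (m : ℝ)) q
          - pdRho (fun p => p.1 / (m : ℝ) * v2 p) q)
      = (-(v2 q) - pdZ v3 q,
         v1 q + pdRho v3 q,
         (1 / (m : ℝ)) * (q.1 * pdZ v1 q - pdRho (fun p => p.1 * v2 p) q - pdZ v3 q)))
      -- and the explicit vector equals η_{m,2}^{-1}(C(v1, v2, v3))
      ∧ ((-(v2 q) - pdZ v3 q,
          v1 q + pdRho v3 q,
          (1 / (m : ℝ)) * (q.1 * pdZ v1 q - pdRho (fun p => p.1 * v2 p) q - pdZ v3 q))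
      = (-(v2 q) - pdZ v3 q,
         v1 q + pdRho v3 q,
         (q.1 * (pdZ v1 q - pdRho v2 q) + (-(v2 q) - pdZ v3 q)) / (m : ℝ))) := by
  intro q hq
  have hdiff {v : ℝ × ℝ → ℝ} (hv : ContDiffOn ℝ 1 v S) : DifferentiableAt ℝ v q :=
    (hv.contDiffAt (hS.mem_nhds hq)).differentiableAt one_ne_zero
  exact ⟨curlMode_etaInv₁_eq (Int.cast_ne_zero.mpr hm) (hSpos q hq).ne'
      (hdiff hv1) (hdiff hv2) (hdiff hv3),
    etaInv₂_cartesianCurl_eq _ (hdiff hv2)⟩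
end
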